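/- arXiv:2109.07643 — 4 statements merged into one kernel-verified Lean document; each statement's English description precedes it below -/
import Mathlib

section
/- Let H and M be n×n real Metzler matrices such that H is Hurwitz and -M H⁻¹ is Metzler. Then M is Hurwitz if and only if -M H⁻¹ is Hurwitz. -/
/-! For a Metzler matrix `A`, call `s` admissible if `A x < s x` coordinatewise for some `x ≥ 0`.
For admissible `s`, `s - A` is monotone: `s y ≤ A y` forces `y ≤ 0` (look at the coordinate
maximizing `y / x`). Hence `s - A` is invertible, `s y - A y = 1` has a solution `y ≥ 0`, and
monotonicity applied to `|w|`, which satisfies `Re μ |w| ≤ A |w|` for an eigenpair `(μ, w)`, gives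
`Re μ < s`. The admissible `s` form an open ray `(r, ∞)`; normalizing the solutions `y` and letting
`s ↓ r` yields, by compactness, a nonnegative eigenvector with eigenvalue `r`. So a Metzler `A` is
Hurwitz iff `A x < 0` for some `x ≥ 0`, and then `A⁻¹ ≤ 0`.

For the theorem, `-H⁻¹ ≥ 0` transports vectors: `x ≥ 0` with `-M H⁻¹ x < 0` gives
`u = -H⁻¹ x ≥ 0` with `M u < 0`; conversely, a nonnegative eigenvector `v` of `-M H⁻¹` with
eigenvalue `≥ 0` gives `z = -H⁻¹ v ≥ 0` with `M z ≥ 0`, which forces `z = 0` when `M` is Hurwitz. -/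

open Matrix

/-- A square real matrix is *Metzler* if all its off-diagonal entries are nonnegative. -/
def IsMetzler {n : ℕ} (A : Matrix (Fin n) (Fin n) ℝ) : Prop :=
  ∀ i j, i ≠ j → 0 ≤ A i j

/-- A square real matrix is *Hurwitz* if every complex eigenvalue has negative real part. -/
def IsHurwitz {n : ℕ} (A : Matrix (Fin n) (Fin n) ℝ) : Prop :=
  ∀ μ ∈ spectrum ℂ (A.map Complex.ofReal), μ.re < 0

/-- The spectral radius of a square real matrix: the maximum modulus of its complex
eigenvalues. -/
noncomputable def specRad {n : ℕ} (A : Matrix (Fin n) (Fin n) ℝ) : ℝ :=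
  sSup {x : ℝ | ∃ μ ∈ spectrum ℂ (A.map Complex.ofReal), x = ‖μ‖}

open Filter Topology Set

theorem Matrix.mem_spectrum_iff_exists_mulVec_eq_smul {K ι : Type*} [Field K] [Fintype ι]
    [DecidableEq ι] {B : Matrix ι ι K} {μ : K} : μ ∈ spectrum K B ↔ ∃ v ≠ 0, B *ᵥ v = μ • v := by
  rw [← Matrix.spectrum_toLin', ← Module.End.hasEigenvalue_iff_mem_spectrum,
    Module.End.hasEigenvalue_iff, Submodule.ne_bot_iff]
  simp only [Module.End.mem_eigenspace_iff, Matrix.toLin'_apply]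
  exact ⟨fun ⟨v, hv, h0⟩ => ⟨v, h0, hv⟩, fun ⟨v, h0, hv⟩ => ⟨v, hv, h0⟩⟩

section

variable {n : ℕ}

theorem Matrix.ofReal_mem_spectrum_map_of_mulVec_eq_smul {A : Matrix (Fin n) (Fin n) ℝ} {r : ℝ}
    {v : Fin n → ℝ} (hv : v ≠ 0) (h : A *ᵥ v = r • v) :
    (r : ℂ) ∈ spectrum ℂ (A.map Complex.ofReal) := by
  refine mem_spectrum_iff_exists_mulVec_eq_smul.2 ⟨Complex.ofReal ∘ v, ?_, funext fun i => ?_⟩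
  · exact fun h0 => hv (funext fun i => Complex.ofReal_eq_zero.1 (congrFun h0 i))
  · exact (Complex.ofRealHom.map_mulVec A v i).symm.trans (by simp [h])

theorem Matrix.isOpen_setOf_exists_mulVec_lt (A : Matrix (Fin n) (Fin n) ℝ) :
    IsOpen {s : ℝ | ∃ x, 0 ≤ x ∧ ∀ i, (A *ᵥ x) i < s * x i} := by
  refine isOpen_iff_mem_nhds.2 fun s ⟨x, hx, hxs⟩ => ?_
  have : ∀ᶠ s' in 𝓝 s, ∀ i, (A *ᵥ x) i < s' * x i :=
    eventually_all.2 fun i => (tendsto_id.mul_const (x i)).eventually (lt_mem_nhds (hxs i))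
  exact this.mono fun s' hs' => ⟨x, hx, hs'⟩

theorem Matrix.exists_nonneg_smul_sub_mulVec_eq_smul_one {A : Matrix (Fin n) (Fin n) ℝ} {r : ℝ}
    (h : ∀ s, r < s → ∃ y, 0 ≤ y ∧ s • y - A *ᵥ y = 1) :
    ∃ z c, 0 ≤ z ∧ 0 ≤ c ∧ ‖z‖ + c = 1 ∧ r • z - A *ᵥ z = c • 1 := by
  set E : Set (ℝ × (Fin n → ℝ) × ℝ) := {p | p.1 ∈ Icc r (r + 1) ∧ 0 ≤ p.2.1 ∧ 0 ≤ p.2.2 ∧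
    ‖p.2.1‖ + p.2.2 = 1 ∧ p.1 • p.2.1 - A *ᵥ p.2.1 = p.2.2 • 1}
  have hE : IsCompact E := by
    refine (isCompact_Icc.prod ((isCompact_closedBall 0 1).prod (isCompact_Icc (a := 0) (b := 1))))
      |>.of_isClosed_subset ?_ fun p ⟨hp1, _, hc, hzc, _⟩ => ⟨hp1, ?_, hc, ?_⟩
    · have hz : Continuous fun p : ℝ × (Fin n → ℝ) × ℝ => p.2.1 := continuous_snd.fst
      have hc : Continuous fun p : ℝ × (Fin n → ℝ) × ℝ => p.2.2 := continuous_snd.snd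
      exact (isClosed_Icc.preimage continuous_fst).inter <|
        (isClosed_le continuous_const hz).inter <| (isClosed_le continuous_const hc).inter <|
        (isClosed_eq (hz.norm.add hc) continuous_const).inter <|
        isClosed_eq ((continuous_fst.smul hz).sub (continuous_const.matrix_mulVec hz))
          (hc.smul continuous_const)
    · rw [mem_closedBall_zero_iff]; linarith
    · linarith [norm_nonneg p.2.1]
  -- normalizing the solution `y` at `s` by `1 + ‖y‖` puts `s` into the projection of `E`
  have hsub : Ioc r (r + 1) ⊆ Prod.fst '' E := fun s hs => by
    obtain ⟨y, hy, hys⟩ := h s hs.1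
    refine ⟨(s, (1 + ‖y‖)⁻¹ • y, (1 + ‖y‖)⁻¹), ⟨Ioc_subset_Icc_self hs,
      smul_nonneg (by positivity) hy, by positivity, ?_, ?_⟩, rfl⟩
    · rw [norm_smul, Real.norm_of_nonneg (by positivity)]
      field_simp
      ring
    · rw [mulVec_smul, smul_comm, ← smul_sub, hys]
  have hr : r ∈ Prod.fst '' E := (hE.image continuous_fst).isClosed.closure_subset_iff.2 hsub
    (by rw [closure_Ioc (by linarith)]; exact left_mem_Icc.2 (by linarith))
  obtain ⟨⟨_, z, c⟩, ⟨-, hz, hc, hzc, heq⟩, rfl⟩ := hr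
  exact ⟨z, c, hz, hc, hzc, heq⟩

end

namespace IsMetzler

variable {n : ℕ} {A : Matrix (Fin n) (Fin n) ℝ}

theorem diag_mul_le_mulVec (hA : IsMetzler A) {x : Fin n → ℝ} (hx : 0 ≤ x) (i : Fin n) :
    A i i * x i ≤ (A *ᵥ x) i := by
  rw [mulVec, dotProduct, ← Finset.add_sum_erase _ _ (Finset.mem_univ i)]
  refine le_add_of_nonneg_right (Finset.sum_nonneg fun j hj => mul_nonneg ?_ (hx j))
  exact hA i j (Finset.ne_of_mem_erase hj).symm

theorem pos_of_mulVec_lt (hA : IsMetzler A) {x : Fin n → ℝ} (hx : 0 ≤ x) {t : ℝ} {i : Fin n}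
    (h : (A *ᵥ x) i < t * x i) : 0 < x i := by
  refine (hx i).lt_of_ne' fun hxi => ?_
  have := hA.diag_mul_le_mulVec hx i
  rw [hxi, Pi.zero_apply, mul_zero] at this h
  exact h.not_ge this

theorem nonpos_of_smul_sub_mulVec_nonpos (hA : IsMetzler A) {x : Fin n → ℝ} (hx : 0 ≤ x)
    {t : ℝ} (hxt : ∀ i, (A *ᵥ x) i < t * x i) {y : Fin n → ℝ} (hy : t • y - A *ᵥ y ≤ 0) :
    y ≤ 0 := by
  intro j
  by_contra! hj
  have hxpos : ∀ i, 0 < x i := fun i => hA.pos_of_mulVec_lt hx (hxt i)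
  obtain ⟨i, -, hi⟩ := Finset.univ.exists_max_image (fun k => y k / x k) ⟨j, Finset.mem_univ j⟩
  set c := y i / x i
  have hc : 0 < c := (div_pos hj (hxpos j)).trans_le (hi j (Finset.mem_univ j))
  have hw : 0 ≤ c • x - y := fun k => by
    simpa [div_le_iff₀ (hxpos k)] using hi k (Finset.mem_univ k)
  have hwi : c * x i = y i := div_mul_cancel₀ _ (hxpos i).ne'
  -- `c x - y ≥ 0` vanishes at `i`, so the sign pattern of `A` gives `(A (c x - y)) i ≥ 0`
  have hdiag := hA.diag_mul_le_mulVec hw i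
  simp only [Pi.sub_apply, Pi.smul_apply, smul_eq_mul, hwi, sub_self, mul_zero, mulVec_sub,
    mulVec_smul] at hdiag
  have hyi : t * y i ≤ (A *ᵥ y) i := by simpa [sub_nonpos] using hy i
  have hcx : c * (A *ᵥ x) i < t * y i := by
    rw [← hwi, mul_left_comm]
    exact mul_lt_mul_of_pos_left (hxt i) hc
  linarith

theorem nonneg_of_smul_sub_mulVec_nonneg (hA : IsMetzler A) {x : Fin n → ℝ} (hx : 0 ≤ x)
    {t : ℝ} (hxt : ∀ i, (A *ᵥ x) i < t * x i) {y : Fin n → ℝ} (hy : 0 ≤ t • y - A *ᵥ y) :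
    0 ≤ y :=
  neg_nonpos.1 <| hA.nonpos_of_smul_sub_mulVec_nonpos hx hxt <| by
    rwa [mulVec_neg, smul_neg, neg_sub_neg, ← neg_sub, neg_nonpos]

theorem smul_one_sub_mulVec_injective (hA : IsMetzler A) {x : Fin n → ℝ} (hx : 0 ≤ x) {t : ℝ}
    (hxt : ∀ i, (A *ᵥ x) i < t * x i) :
    Function.Injective (t • (1 : Matrix _ _ ℝ) - A).mulVec := by
  intro y₁ y₂ h
  have hd : t • (y₁ - y₂) - A *ᵥ (y₁ - y₂) = 0 := by
    rwa [← sub_eq_zero, ← mulVec_sub, sub_mulVec, smul_mulVec, one_mulVec] at h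
  exact sub_eq_zero.1 (le_antisymm (hA.nonpos_of_smul_sub_mulVec_nonpos hx hxt hd.le)
    (hA.nonneg_of_smul_sub_mulVec_nonneg hx hxt hd.ge))

theorem exists_nonneg_smul_sub_mulVec_eq_one (hA : IsMetzler A) {x : Fin n → ℝ} (hx : 0 ≤ x)
    {t : ℝ} (hxt : ∀ i, (A *ᵥ x) i < t * x i) : ∃ y, 0 ≤ y ∧ t • y - A *ᵥ y = 1 := by
  obtain ⟨y, hy⟩ := mulVec_surjective_iff_isUnit.2
    (mulVec_injective_iff_isUnit.1 (hA.smul_one_sub_mulVec_injective hx hxt)) 1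
  rw [sub_mulVec, smul_mulVec, one_mulVec] at hy
  exact ⟨y, hA.nonneg_of_smul_sub_mulVec_nonneg hx hxt (hy ▸ zero_le_one), hy⟩

theorem re_mul_norm_le_mulVec_norm (hA : IsMetzler A) {μ : ℂ} {w : Fin n → ℂ}
    (hw : A.map Complex.ofReal *ᵥ w = μ • w) (i : Fin n) :
    μ.re * ‖w i‖ ≤ (A *ᵥ fun j => ‖w j‖) i := by
  have hrow : (μ - A i i) * w i = ∑ j ∈ Finset.univ.erase i, (A i j : ℂ) * w j := by
    have := congrFun hw i
    simp only [mulVec, dotProduct, map_apply, Pi.smul_apply, smul_eq_mul] at this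
    rw [← Finset.add_sum_erase _ _ (Finset.mem_univ i)] at this
    linear_combination -this
  have hnorm : ‖μ - A i i‖ * ‖w i‖ ≤ ∑ j ∈ Finset.univ.erase i, A i j * ‖w j‖ := by
    rw [← norm_mul, hrow]
    refine (norm_sum_le _ _).trans (le_of_eq (Finset.sum_congr rfl fun j hj => ?_))
    rw [norm_mul, Complex.norm_real, Real.norm_of_nonneg (hA i j (Finset.ne_of_mem_erase hj).symm)]
  have hre : μ.re - A i i ≤ ‖μ - A i i‖ := by simpa using Complex.re_le_norm (μ - A i i)
  rw [mulVec, dotProduct, ← Finset.add_sum_erase _ _ (Finset.mem_univ i)]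
  nlinarith [norm_nonneg (w i)]

theorem re_lt_of_mem_spectrum (hA : IsMetzler A) {x : Fin n → ℝ} (hx : 0 ≤ x) {t : ℝ}
    (hxt : ∀ i, (A *ᵥ x) i < t * x i) {μ : ℂ} (hμ : μ ∈ spectrum ℂ (A.map Complex.ofReal)) :
    μ.re < t := by
  obtain ⟨w, hw0, hw⟩ := mem_spectrum_iff_exists_mulVec_eq_smul.1 hμ
  by_contra! htμ
  have hnorm : (fun j => ‖w j‖) ≤ 0 := hA.nonpos_of_smul_sub_mulVec_nonpos hx hxt fun i => by
    have := hA.re_mul_norm_le_mulVec_norm hw i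
    simp only [Pi.sub_apply, Pi.smul_apply, smul_eq_mul, Pi.zero_apply, sub_nonpos]
    nlinarith [norm_nonneg (w i)]
  exact hw0 (funext fun j => norm_le_zero_iff.1 (hnorm j))

theorem exists_nonneg_eigenvector (hA : IsMetzler A) {t : ℝ}
    (ht : ¬∃ x, 0 ≤ x ∧ ∀ i, (A *ᵥ x) i < t * x i) :
    ∃ r, t ≤ r ∧ ∃ v, 0 ≤ v ∧ v ≠ 0 ∧ A *ᵥ v = r • v := by
  set S := {s : ℝ | ∃ x, 0 ≤ x ∧ ∀ i, (A *ᵥ x) i < s * x i}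
  have hup : ∀ s ∈ S, ∀ s', s ≤ s' → s' ∈ S := fun s ⟨x, hx, hxs⟩ s' hss' =>
    ⟨x, hx, fun i => (hxs i).trans_le (mul_le_mul_of_nonneg_right hss' (hx i))⟩
  have hne : S.Nonempty := ⟨‖A *ᵥ 1‖ + 1, 1, zero_le_one, fun i => by
    simpa using (le_abs_self _).trans_lt ((norm_le_pi_norm (A *ᵥ 1) i).trans_lt (lt_add_one _))⟩
  have htS : ∀ s ∈ S, t ≤ s := fun s hs => le_of_not_ge fun hst => ht (hup s hs t hst)
  set r := sInf S
  have hgt : ∀ s, r < s → s ∈ S := fun s hs =>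
    let ⟨s', hs', hs's⟩ := exists_lt_of_csInf_lt hne hs
    hup s' hs' s hs's.le
  have hr : r ∉ S := fun hr => by
    obtain ⟨l, hlr, hl⟩ := exists_Ioc_subset_of_mem_nhds
      ((isOpen_setOf_exists_mulVec_lt A).mem_nhds hr) (exists_lt r)
    have hmid : (l + r) / 2 < r := add_div_two_lt_right.2 hlr
    exact (csInf_le ⟨t, htS⟩ (hl ⟨left_lt_add_div_two.2 hlr, hmid.le⟩)).not_gt hmid
  obtain ⟨z, c, hz, hc, hzc, heq⟩ := exists_nonneg_smul_sub_mulVec_eq_smul_one fun s hs =>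
    let ⟨x, hx, hxs⟩ := hgt s hs
    hA.exists_nonneg_smul_sub_mulVec_eq_one hx hxs
  -- a positive right-hand side `c` would exhibit `r` itself as a member of `S`
  obtain rfl : c = 0 := by
    refine le_antisymm (not_lt.1 fun hc => hr ⟨z, hz, fun i => ?_⟩) hc
    have := congrFun heq i
    simp only [Pi.sub_apply, Pi.smul_apply, smul_eq_mul, Pi.one_apply, mul_one] at this
    linarith
  refine ⟨r, le_csInf hne htS, z, hz, fun hz0 => by simp [hz0] at hzc, ?_⟩
  rw [zero_smul, sub_eq_zero] at heq
  exact heq.symm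

theorem isHurwitz_iff (hA : IsMetzler A) : IsHurwitz A ↔ ∃ x, 0 ≤ x ∧ ∀ i, (A *ᵥ x) i < 0 := by
  refine ⟨fun hH => ?_, fun ⟨x, hx, hxA⟩ μ hμ => hA.re_lt_of_mem_spectrum hx (t := 0)
    (by simpa using hxA) hμ⟩
  by_contra h
  obtain ⟨r, hr, v, -, hv0, hv⟩ := hA.exists_nonneg_eigenvector (t := 0) (by simpa using h)
  exact (hH _ (ofReal_mem_spectrum_map_of_mulVec_eq_smul hv0 hv)).not_ge hr

theorem exists_nonneg_eigenvector_of_not_isHurwitz (hA : IsMetzler A) (hH : ¬IsHurwitz A) :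
    ∃ r : ℝ, 0 ≤ r ∧ ∃ v, 0 ≤ v ∧ v ≠ 0 ∧ A *ᵥ v = r • v :=
  hA.exists_nonneg_eigenvector fun ⟨x, hx, hxA⟩ =>
    hH (hA.isHurwitz_iff.2 ⟨x, hx, by simpa using hxA⟩)

theorem nonpos_of_isHurwitz (hA : IsMetzler A) (hH : IsHurwitz A) {y : Fin n → ℝ}
    (hy : 0 ≤ A *ᵥ y) : y ≤ 0 := by
  obtain ⟨x, hx, hxA⟩ := hA.isHurwitz_iff.1 hH
  exact hA.nonpos_of_smul_sub_mulVec_nonpos hx (t := 0) (by simpa using hxA) (by simpa using hy)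

theorem isUnit_det_of_isHurwitz (hA : IsMetzler A) (hH : IsHurwitz A) : IsUnit A.det := by
  obtain ⟨x, hx, hxA⟩ := hA.isHurwitz_iff.1 hH
  have := mulVec_injective_iff_isUnit.1
    (hA.smul_one_sub_mulVec_injective hx (t := 0) (by simpa using hxA))
  simpa [isUnit_iff_isUnit_det] using this

theorem inv_mulVec_nonpos (hA : IsMetzler A) (hH : IsHurwitz A) {w : Fin n → ℝ} (hw : 0 ≤ w) :
    A⁻¹ *ᵥ w ≤ 0 :=
  hA.nonpos_of_isHurwitz hH (by
    rwa [mulVec_mulVec, mul_nonsing_inv _ (hA.isUnit_det_of_isHurwitz hH), one_mulVec])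

end IsMetzler

/-- Lemma 2 (Properties of Hurwitz and Metzler Matrices): if `H` and `M` are Metzler,
`H` is Hurwitz, and `-M H⁻¹` is Metzler, then `M` is Hurwitz iff `-M H⁻¹` is Hurwitz. -/
theorem metzler_hurwitz_iff_neg_mul_inv_hurwitz {n : ℕ} (H M : Matrix (Fin n) (Fin n) ℝ)
    (hHmetzler : IsMetzler H) (hMmetzler : IsMetzler M) (hHhurwitz : IsHurwitz H)
    (hMHmetzler : IsMetzler (-(M * H⁻¹))) :
    IsHurwitz M ↔ IsHurwitz (-(M * H⁻¹)) := by
  have hM_neg_inv : ∀ w, M *ᵥ -(H⁻¹ *ᵥ w) = -(M * H⁻¹) *ᵥ w := fun w => by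
    rw [mulVec_neg, mulVec_mulVec, neg_mulVec]
  constructor
  · intro hM
    by_contra hA
    obtain ⟨r, hr, v, hv, hv0, hAv⟩ := hMHmetzler.exists_nonneg_eigenvector_of_not_isHurwitz hA
    have hz : 0 ≤ -(H⁻¹ *ᵥ v) := neg_nonneg.2 (hHmetzler.inv_mulVec_nonpos hHhurwitz hv)
    have hz' : -(H⁻¹ *ᵥ v) ≤ 0 := hMmetzler.nonpos_of_isHurwitz hM
      (by rw [hM_neg_inv, hAv]; exact smul_nonneg hr hv)
    have hz0 : H⁻¹ *ᵥ v = 0 := neg_eq_zero.1 (le_antisymm hz' hz)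
    refine hv0 ?_
    rw [← one_mulVec v, ← mul_nonsing_inv _ (hHmetzler.isUnit_det_of_isHurwitz hHhurwitz),
      ← mulVec_mulVec, hz0, mulVec_zero]
  · intro hA
    obtain ⟨x, hx, hAx⟩ := hMHmetzler.isHurwitz_iff.1 hA
    refine hMmetzler.isHurwitz_iff.2 ⟨-(H⁻¹ *ᵥ x), ?_, by rwa [hM_neg_inv]⟩
    exact neg_nonneg.2 (hHmetzler.inv_mulVec_nonpos hHhurwitz hx)
end

section
/- Let H be an n×n real matrix that is Metzler and Hurwitz, and let E be an n×n real matrix with all entries nonnegative. Then H + E is Hurwitz if and only if the spectral radius of -E H⁻¹ is strictly less than 1. -/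
open Matrix

/-!
Adding `s • 1` to a Metzler matrix makes it entrywise nonnegative, and a nonnegative matrix `B`
has its spectral radius `ρ(B)` as an eigenvalue (weak Perron–Frobenius): for `|z| > ρ(B)` the
Neumann series bounds the resolvent `(z - B)⁻¹` entrywise by `(|z| - B)⁻¹ ≥ 0`, which grows as
`|z| ↓ ρ(B)`; if `ρ(B)` were regular, the resolvent would stay bounded as `z` approaches an
eigenvalue of modulus `ρ(B)` radially, which is impossible. Consequently a Metzler matrix is
Hurwitz iff it has no eigenvalue `c ≥ 0`, a Metzler matrix below a Hurwitz one is Hurwitz, and for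
a Hurwitz Metzler `H` the matrix `(c - H)⁻¹` is nonnegative and decreasing in `c ≥ 0`.

Since `c - (H + E) = (1 - E (c - H)⁻¹) (c - H)`, a real `c ≥ 0` is an eigenvalue of `H + E` iff
`1` is an eigenvalue of `E (c - H)⁻¹`, a nonnegative matrix below `-E H⁻¹`; so `ρ(-E H⁻¹) < 1`
rules out such `c`. Conversely, if `ρ = ρ(-E H⁻¹) ≥ 1`, then `1` is an eigenvalue of
`-ρ⁻¹ E H⁻¹`, so `H + ρ⁻¹ E` is singular, although as a Metzler matrix below `H + E` it is
Hurwitz.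
-/

open Complex
open scoped Matrix.Norms.Operator

variable {n : ℕ}

theorem isUnit_of_norm_sub_mul_lt {R : Type*} [NormedRing R] [CompleteSpace R] {x y : R}
    (hx : IsUnit x) {C : ℝ} (hC : ‖Ring.inverse x‖ ≤ C) (h : ‖y - x‖ * C < 1) : IsUnit y := by
  set t := -(Ring.inverse x * (y - x))
  have ht : ‖t‖ < 1 := calc
    ‖t‖ ≤ ‖Ring.inverse x‖ * ‖y - x‖ := by rw [norm_neg]; exact norm_mul_le _ _
    _ ≤ ‖y - x‖ * C := by rw [mul_comm]; gcongr
    _ < 1 := h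
  have hy : y = x * (1 - t) := by
    rw [sub_neg_eq_add, mul_add, mul_one, ← mul_assoc, Ring.mul_inverse_cancel x hx, one_mul,
      add_sub_cancel]
  exact hy ▸ hx.mul (Units.oneSub t ht).isUnit

theorem notMem_spectrum_of_norm_resolvent_le {𝕜 A : Type*} [NormedField 𝕜] [NormedRing A]
    [NormedAlgebra 𝕜 A] [CompleteSpace A] {a : A} {z w : 𝕜} {C : ℝ}
    (hz : z ∉ spectrum 𝕜 a) (hC : ‖resolvent a z‖ ≤ C) (hw : ‖w - z‖ * ‖(1 : A)‖ * C < 1) :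
    w ∉ spectrum 𝕜 a := by
  refine spectrum.notMem_iff.mpr (isUnit_of_norm_sub_mul_lt (spectrum.notMem_iff.mp hz) hC ?_)
  rwa [sub_sub_sub_cancel_right, ← map_sub, norm_algebraMap]

theorem hasSum_resolvent {A : Type*} [NormedRing A] [NormedAlgebra ℂ A] [CompleteSpace A]
    {a : A} {z : ℂ} (hz : spectralRadius ℂ a < ‖z‖₊) :
    HasSum (fun k : ℕ => z⁻¹ ^ (k + 1) • a ^ k) (resolvent a z) := by
  have hz0 : z ≠ 0 := by rintro rfl; simp at hz
  have hy : (‖z⁻¹‖₊ : ENNReal) < (spectralRadius ℂ a)⁻¹ := by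
    rw [nnnorm_inv, ENNReal.coe_inv (by simpa using hz0)]
    exact ENNReal.inv_lt_inv.mpr hz
  obtain ⟨r, hr1, hr2⟩ := ENNReal.lt_iff_exists_nnreal_btwn.mp hy
  -- `w ↦ (1 - w • a)⁻¹` is holomorphic on the ball of radius `(spectralRadius ℂ a)⁻¹`, so its
  -- power series `∑ wᵏ aᵏ` converges there.
  have hball := (spectrum.hasFPowerSeriesOnBall_inverse_one_sub_smul ℂ a).exchange_radius
    ((spectrum.differentiableOn_inverse_one_sub_smul hr2).hasFPowerSeriesOnBall
      (ENNReal.coe_pos.mp (zero_le.trans_lt hr1)))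
  have hs := (hball.hasSum (y := z⁻¹) (by
    rwa [Metric.mem_eball, edist_zero_right, enorm_eq_nnnorm])).const_smul z⁻¹
  have hres : z • resolvent a z = Ring.inverse (1 - z⁻¹ • a) := by
    simpa [resolvent, Units.smul_def] using
      spectrum.units_smul_resolvent_self (r := Units.mk0 z hz0) (a := a)
  rw [← inv_smul_smul₀ hz0 (resolvent a z), hres]
  simp only [ContinuousMultilinearMap.mkPiRing_apply, Finset.prod_const, Finset.card_univ,
    Fintype.card_fin, zero_add, smul_smul, ← pow_succ'] at hs
  exact hs

theorem Ring.inverse_neg {R : Type*} [Ring R] (a : R) : Ring.inverse (-a) = -Ring.inverse a := by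
  by_cases h : IsUnit a
  · obtain ⟨u, rfl⟩ := h
    rw [← Units.val_neg, Ring.inverse_unit, Ring.inverse_unit, inv_neg, Units.val_neg]
  · rw [Ring.inverse_non_unit _ h, Ring.inverse_non_unit _ (mt (IsUnit.neg_iff a).mp h), neg_zero]

theorem add_mem_spectrum_add_smul_one_iff {R A : Type*} [CommRing R] [Ring A] [Algebra R A]
    {a : A} {r s : R} : r + s ∈ spectrum R (a + s • 1) ↔ r ∈ spectrum R a := by
  rw [← Algebra.algebraMap_eq_smul_one, add_comm a, spectrum.add_mem_add_iff]

theorem resolvent_add_smul_one {R A : Type*} [CommRing R] [Ring A] [Algebra R A]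
    (a : A) (r s : R) : resolvent (a + s • 1) (r + s) = resolvent a r := by
  rw [resolvent, resolvent, ← Algebra.algebraMap_eq_smul_one, map_add]
  congr 1
  abel

theorem notMem_spectrum_add_iff {R A : Type*} [CommRing R] [Ring A] [Algebra R A] {a b : A}
    {r : R} (hr : r ∉ spectrum R a) :
    r ∉ spectrum R (a + b) ↔ (1 : R) ∉ spectrum R (b * resolvent a r) := by
  have hu := spectrum.notMem_iff.mp hr
  have hfac : algebraMap R A r - (a + b) =
      (algebraMap R A 1 - b * resolvent a r) * (algebraMap R A r - a) := by
    rw [map_one, sub_mul, one_mul, mul_assoc, resolvent, Ring.inverse_mul_cancel _ hu, mul_one]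
    abel
  rw [spectrum.notMem_iff, spectrum.notMem_iff, hfac, hu.mul_right_iff]

theorem Matrix.linfty_opNorm_le_of_norm_apply_le {l m α β : Type*} [Fintype l] [Fintype m]
    [NormedAddCommGroup α] [NormedAddCommGroup β] {M : Matrix l m α} {N : Matrix l m β}
    (h : ∀ i j, ‖M i j‖ ≤ ‖N i j‖) : ‖M‖ ≤ ‖N‖ := by
  rw [Matrix.linfty_opNorm_def, Matrix.linfty_opNorm_def, NNReal.coe_le_coe]
  exact Finset.sup_mono_fun fun i _ => Finset.sum_le_sum fun j _ => h i j

theorem Matrix.norm_pow_apply_le {m α : Type*} [Fintype m] [DecidableEq m] [NormedRing α]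
    [NormOneClass α] {M : Matrix m m α} {C : Matrix m m ℝ} (h : ∀ i j, ‖M i j‖ ≤ C i j) (k : ℕ)
    (i j : m) :
    ‖(M ^ k) i j‖ ≤ (C ^ k) i j := by
  induction k generalizing j with
  | zero => by_cases hij : i = j <;> simp [hij]
  | succ k ih =>
    rw [pow_succ, pow_succ, Matrix.mul_apply, Matrix.mul_apply]
    refine (norm_sum_le _ _).trans (Finset.sum_le_sum fun l _ => ?_)
    exact (norm_mul_le _ _).trans
      (mul_le_mul (ih l) (h l j) (norm_nonneg _) ((norm_nonneg _).trans (ih l)))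

theorem Matrix.mul_apply_nonneg {l m o : Type*} [Fintype m] {E : Matrix l m ℝ} {R : Matrix m o ℝ}
    (hE : ∀ i j, 0 ≤ E i j) (hR : ∀ i j, 0 ≤ R i j) (i : l) (j : o) : 0 ≤ (E * R) i j :=
  Finset.sum_nonneg fun k _ => mul_nonneg (hE i k) (hR k j)

theorem Matrix.mul_apply_le_mul_apply {l m o : Type*} [Fintype m] {E : Matrix l m ℝ}
    {R R' : Matrix m o ℝ} (hE : ∀ i j, 0 ≤ E i j) (hR : ∀ i j, R i j ≤ R' i j) (i : l) (j : o) :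
    (E * R) i j ≤ (E * R') i j :=
  Finset.sum_le_sum fun k _ => mul_le_mul_of_nonneg_left (hR k j) (hE i k)

theorem det_map_ofReal (X : Matrix (Fin n) (Fin n) ℝ) : (X.map ofReal).det = X.det :=
  (RingHom.map_det ofRealHom X).symm

theorem isUnit_map_ofReal_iff (X : Matrix (Fin n) (Fin n) ℝ) :
    IsUnit (X.map ofReal) ↔ IsUnit X := by
  rw [isUnit_iff_isUnit_det, isUnit_iff_isUnit_det, det_map_ofReal, isUnit_iff_ne_zero,
    isUnit_iff_ne_zero, ofReal_ne_zero]

theorem map_ofReal_pow (X : Matrix (Fin n) (Fin n) ℝ) (k : ℕ) :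
    (X ^ k).map ofReal = X.map ofReal ^ k :=
  Matrix.map_pow X ofRealHom k

theorem inv_map_ofReal (X : Matrix (Fin n) (Fin n) ℝ) : (X.map ofReal)⁻¹ = X⁻¹.map ofReal := by
  have hadj : (X.map ofReal).adjugate = X.adjugate.map ofReal :=
    (RingHom.map_adjugate ofRealHom X).symm
  ext i j
  simp [Matrix.inv_def, det_map_ofReal, hadj]

theorem algebraMap_sub_map_ofReal (X : Matrix (Fin n) (Fin n) ℝ) (r : ℝ) :
    algebraMap ℂ _ (r : ℂ) - X.map ofReal = (algebraMap ℝ _ r - X).map ofReal := by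
  ext i j
  by_cases hij : i = j <;> simp [Matrix.algebraMap_eq_diagonal, hij]

theorem map_ofReal_add_smul_one (M : Matrix (Fin n) (Fin n) ℝ) (s : ℝ) :
    (M + s • 1).map ofReal = M.map ofReal + (s : ℂ) • 1 := by
  ext i j
  by_cases hij : i = j <;> simp [hij]

theorem ofReal_mem_spectrum_map_iff (X : Matrix (Fin n) (Fin n) ℝ) (r : ℝ) :
    (r : ℂ) ∈ spectrum ℂ (X.map ofReal) ↔ r ∈ spectrum ℝ X := by
  rw [spectrum.mem_iff, spectrum.mem_iff, algebraMap_sub_map_ofReal, isUnit_map_ofReal_iff]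

theorem resolvent_map_ofReal (X : Matrix (Fin n) (Fin n) ℝ) (r : ℝ) :
    resolvent (X.map ofReal) (r : ℂ) = (resolvent X r).map ofReal := by
  rw [resolvent, resolvent, algebraMap_sub_map_ofReal, ← Matrix.nonsing_inv_eq_ringInverse,
    ← Matrix.nonsing_inv_eq_ringInverse, inv_map_ofReal]

theorem exists_mem_spectrum_norm_eq_specRad {B : Matrix (Fin n) (Fin n) ℝ}
    (h : (spectrum ℂ (B.map ofReal)).Nonempty) :
    ∃ lam ∈ spectrum ℂ (B.map ofReal), ‖lam‖ = specRad B ∧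
      ∀ μ ∈ spectrum ℂ (B.map ofReal), ‖μ‖ ≤ ‖lam‖ := by
  obtain ⟨lam, hlam, hmax⟩ :=
    (spectrum.isCompact _).exists_isMaxOn h continuous_norm.continuousOn
  refine ⟨lam, hlam, ?_, fun μ hμ => hmax hμ⟩
  refine Eq.symm (IsGreatest.csSup_eq ⟨⟨lam, hlam, rfl⟩, ?_⟩)
  rintro _ ⟨μ, hμ, rfl⟩
  exact hmax hμ

theorem norm_le_specRad {B : Matrix (Fin n) (Fin n) ℝ} {μ : ℂ}
    (hμ : μ ∈ spectrum ℂ (B.map ofReal)) : ‖μ‖ ≤ specRad B := by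
  obtain ⟨lam, -, hlam, hmax⟩ := exists_mem_spectrum_norm_eq_specRad ⟨μ, hμ⟩
  exact hlam ▸ hmax μ hμ

theorem abs_le_specRad {B : Matrix (Fin n) (Fin n) ℝ} {r : ℝ} (hr : r ∈ spectrum ℝ B) :
    |r| ≤ specRad B := by
  simpa using norm_le_specRad ((ofReal_mem_spectrum_map_iff B r).mpr hr)

theorem specRad_nonneg (B : Matrix (Fin n) (Fin n) ℝ) : 0 ≤ specRad B :=
  Real.sSup_nonneg (by rintro _ ⟨μ, -, rfl⟩; exact norm_nonneg μ)

theorem spectralRadius_map_ofReal (B : Matrix (Fin n) (Fin n) ℝ) :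
    spectralRadius ℂ (B.map ofReal) = ENNReal.ofReal (specRad B) := by
  rcases (spectrum ℂ (B.map ofReal)).eq_empty_or_nonempty with h | h
  · simp [spectralRadius, specRad, h]
  obtain ⟨lam, hlam, hρ, hmax⟩ := exists_mem_spectrum_norm_eq_specRad h
  rw [← hρ, ofReal_norm, enorm_eq_nnnorm]
  exact le_antisymm (iSup₂_le fun μ hμ => by exact_mod_cast hmax μ hμ)
    (le_iSup₂ (f := fun μ _ => (‖μ‖₊ : ENNReal)) lam hlam)

theorem spectralRadius_le_of_norm_apply_le {M : Matrix (Fin n) (Fin n) ℂ}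
    {C : Matrix (Fin n) (Fin n) ℝ} (h : ∀ i j, ‖M i j‖ ≤ C i j) :
    spectralRadius ℂ M ≤ spectralRadius ℂ (C.map ofReal) := by
  have hC : ∀ i j, 0 ≤ C i j := fun i j => (norm_nonneg _).trans (h i j)
  refine le_of_tendsto_of_tendsto'
    (spectrum.pow_nnnorm_pow_one_div_tendsto_nhds_spectralRadius M)
    (spectrum.pow_nnnorm_pow_one_div_tendsto_nhds_spectralRadius _) fun k => ?_
  have : ‖M ^ k‖₊ ≤ ‖C.map ofReal ^ k‖₊ := by
    refine Matrix.linfty_opNorm_le_of_norm_apply_le fun i j => ?_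
    rw [← map_ofReal_pow, Matrix.map_apply, norm_real,
      Real.norm_of_nonneg (Matrix.pow_apply_nonneg hC k i j)]
    exact Matrix.norm_pow_apply_le h k i j
  gcongr

theorem specRad_le_of_abs_le {B C : Matrix (Fin n) (Fin n) ℝ} (h : ∀ i j, |B i j| ≤ C i j) :
    specRad B ≤ specRad C := by
  have := spectralRadius_le_of_norm_apply_le (M := B.map ofReal) (C := C) (by simpa using h)
  rwa [spectralRadius_map_ofReal, spectralRadius_map_ofReal,
    ENNReal.ofReal_le_ofReal_iff (specRad_nonneg C)] at this

theorem spectralRadius_map_ofReal_lt_nnnorm {B : Matrix (Fin n) (Fin n) ℝ} {z : ℂ}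
    (hz : specRad B < ‖z‖) : spectralRadius ℂ (B.map ofReal) < ‖z‖₊ := by
  rwa [spectralRadius_map_ofReal, ← enorm_eq_nnnorm, ← ofReal_norm,
    ENNReal.ofReal_lt_ofReal_iff ((specRad_nonneg B).trans_lt hz)]

theorem hasSum_resolvent_map_ofReal_apply {B : Matrix (Fin n) (Fin n) ℝ} {z : ℂ}
    (hz : specRad B < ‖z‖) (i j : Fin n) :
    HasSum (fun k : ℕ => z⁻¹ ^ (k + 1) * ((B ^ k) i j : ℂ)) (resolvent (B.map ofReal) z i j) := by
  have h := hasSum_resolvent (spectralRadius_map_ofReal_lt_nnnorm hz)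
  simpa [← map_ofReal_pow] using Pi.hasSum.mp (Pi.hasSum.mp h i) j

theorem hasSum_resolvent_apply {B : Matrix (Fin n) (Fin n) ℝ} {s : ℝ} (hs : specRad B < s)
    (i j : Fin n) : HasSum (fun k : ℕ => s⁻¹ ^ (k + 1) * (B ^ k) i j) (resolvent B s i j) := by
  have hs' : specRad B < ‖(s : ℂ)‖ := by
    rwa [norm_real, Real.norm_of_nonneg ((specRad_nonneg B).trans hs.le)]
  have h := hasSum_resolvent_map_ofReal_apply hs' i j
  rw [resolvent_map_ofReal, Matrix.map_apply] at h
  exact_mod_cast h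

section Nonneg

variable {B : Matrix (Fin n) (Fin n) ℝ} (hB : ∀ i j, 0 ≤ B i j)
include hB

theorem resolvent_apply_nonneg {s : ℝ} (hs : specRad B < s) (i j : Fin n) :
    0 ≤ resolvent B s i j := by
  have hs0 : 0 ≤ s := (specRad_nonneg B).trans hs.le
  exact (hasSum_resolvent_apply hs i j).nonneg fun k =>
    mul_nonneg (pow_nonneg (inv_nonneg.2 hs0) _) (Matrix.pow_apply_nonneg hB k i j)

theorem resolvent_apply_le_of_specRad_lt {s t : ℝ} (ht : specRad B < t) (hts : t ≤ s)
    (i j : Fin n) : resolvent B s i j ≤ resolvent B t i j := by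
  have ht0 : 0 < t := (specRad_nonneg B).trans_lt ht
  refine hasSum_le (fun k => ?_) (hasSum_resolvent_apply (ht.trans_le hts) i j)
    (hasSum_resolvent_apply ht i j)
  gcongr
  · exact Matrix.pow_apply_nonneg hB k i j
  · exact inv_nonneg.2 (ht0.le.trans hts)

theorem norm_resolvent_map_ofReal_apply_le {z : ℂ} (hz : specRad B < ‖z‖) (i j : Fin n) :
    ‖resolvent (B.map ofReal) z i j‖ ≤ resolvent B ‖z‖ i j := by
  refine (hasSum_resolvent_map_ofReal_apply hz i j).norm_le_of_bounded
    (hasSum_resolvent_apply hz i j) fun k => ?_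
  simp [norm_pow, norm_inv, abs_of_nonneg (Matrix.pow_apply_nonneg hB k i j)]

theorem resolvent_apply_le_of_notMem_spectrum {s t : ℝ} (ht : specRad B ≤ t)
    (htB : t ∉ spectrum ℝ B) (hts : t < s) (i j : Fin n) :
    resolvent B s i j ≤ resolvent B t i j := by
  have hcont := (spectrum.hasDerivAt_resolvent_const_left
    (Set.notMem_compl_iff.mp htB)).continuousAt.tendsto
  have hij := tendsto_pi_nhds.mp (tendsto_pi_nhds.mp hcont i) j
  refine ge_of_tendsto (hij.mono_left (nhdsWithin_le_nhds (s := Set.Ioi t))) ?_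
  filter_upwards [Ioo_mem_nhdsGT hts] with u hu
  exact resolvent_apply_le_of_specRad_lt hB (ht.trans_lt hu.1) hu.2.le i j

end Nonneg

theorem norm_resolvent_map_ofReal_le {B : Matrix (Fin n) (Fin n) ℝ} (hB : ∀ i j, 0 ≤ B i j)
    {t : ℝ} (ht : specRad B ≤ t) (htB : t ∉ spectrum ℝ B) {z : ℂ} (hz : t < ‖z‖) :
    ‖resolvent (B.map ofReal) z‖ ≤ ‖resolvent B t‖ :=
  Matrix.linfty_opNorm_le_of_norm_apply_le fun i j =>
    (norm_resolvent_map_ofReal_apply_le hB (ht.trans_lt hz) i j).trans <|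
      (resolvent_apply_le_of_notMem_spectrum hB ht htB hz i j).trans (Real.le_norm_self _)

theorem specRad_mem_spectrum {B : Matrix (Fin n) (Fin n) ℝ} (hB : ∀ i j, 0 ≤ B i j)
    (hρ : 0 < specRad B) : specRad B ∈ spectrum ℝ B := by
  set ρ := specRad B
  by_contra hρB
  have hne : (spectrum ℂ (B.map ofReal)).Nonempty := by
    by_contra h
    simp [ρ, specRad, Set.not_nonempty_iff_eq_empty.mp h] at hρ
  obtain ⟨lam, hlam, hnorm, -⟩ := exists_mem_spectrum_norm_eq_specRad hne
  -- Outside the disc of radius `ρ` the resolvent is bounded by that of `B` at `ρ`; the point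
  -- `z = (1 + ε) lam` is so close to `lam` that this bound makes `lam` regular.
  set C := ‖(1 : Matrix (Fin n) (Fin n) ℂ)‖ * ‖resolvent B ρ‖
  have hC : 0 ≤ C := by positivity
  set ε := (ρ * (C + 1))⁻¹
  have hε : 0 < ε := by positivity
  set z := ((1 + ε : ℝ) : ℂ) * lam
  have hz : ‖z‖ = (1 + ε) * ρ := by
    rw [norm_mul, hnorm, norm_real, Real.norm_of_nonneg (by positivity)]
  have hρz : ρ < ‖z‖ := by rw [hz]; nlinarith
  have hzB : z ∉ spectrum ℂ (B.map ofReal) := fun h => (norm_le_specRad h).not_gt hρz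
  refine (notMem_spectrum_of_norm_resolvent_le hzB
    (norm_resolvent_map_ofReal_le hB le_rfl hρB hρz) ?_) hlam
  have : ‖lam - z‖ = ε * ρ := by
    rw [show lam - z = -((ε : ℝ) : ℂ) * lam by push_cast [z]; ring, norm_mul, norm_neg, norm_real,
      Real.norm_of_nonneg hε.le, hnorm]
  rw [this, mul_assoc]
  calc ε * ρ * C = C / (C + 1) := by simp only [ε]; field_simp
    _ < 1 := (div_lt_one (by linarith)).mpr (lt_add_one C)

theorem IsMetzler.exists_nonneg_add_smul_one {M : Matrix (Fin n) (Fin n) ℝ} (hM : IsMetzler M) :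
    ∃ s : ℝ, 0 < s ∧ ∀ i j, 0 ≤ (M + s • 1) i j := by
  refine ⟨1 + ∑ k, |M k k|, by positivity, fun i j => ?_⟩
  rcases eq_or_ne i j with rfl | hij
  · have := Finset.single_le_sum (fun k _ => abs_nonneg (M k k)) (Finset.mem_univ i)
    simp only [Matrix.add_apply, Matrix.smul_apply, Matrix.one_apply_eq, smul_eq_mul]
    linarith [neg_abs_le (M i i)]
  · simpa [Matrix.one_apply_ne hij] using hM i j hij

theorem IsMetzler.add_of_nonneg {M E : Matrix (Fin n) (Fin n) ℝ} (hM : IsMetzler M)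
    (hE : ∀ i j, 0 ≤ E i j) : IsMetzler (M + E) :=
  fun i j hij => add_nonneg (hM i j hij) (hE i j)

theorem IsHurwitz.notMem_spectrum {M : Matrix (Fin n) (Fin n) ℝ} (hM : IsHurwitz M) {c : ℝ}
    (hc : 0 ≤ c) : c ∉ spectrum ℝ M := fun h =>
  (hM c ((ofReal_mem_spectrum_map_iff M c).mpr h)).not_ge hc

theorem specRad_add_smul_one_lt {M : Matrix (Fin n) (Fin n) ℝ} {s : ℝ} (hs : 0 < s)
    (hA : ∀ i j, 0 ≤ (M + s • 1) i j) (hM : ∀ c : ℝ, 0 ≤ c → c ∉ spectrum ℝ M) :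
    specRad (M + s • 1) < s := by
  by_contra! h
  have hmem := specRad_mem_spectrum hA (hs.trans_le h)
  rw [← sub_add_cancel (specRad (M + s • 1)) s, add_mem_spectrum_add_smul_one_iff] at hmem
  exact hM _ (sub_nonneg.mpr h) hmem

theorem isHurwitz_of_specRad_add_smul_one_lt {M : Matrix (Fin n) (Fin n) ℝ} {s : ℝ}
    (h : specRad (M + s • 1) < s) : IsHurwitz M := by
  intro μ hμ
  have hmem : μ + s ∈ spectrum ℂ ((M + s • 1).map ofReal) := by
    rwa [map_ofReal_add_smul_one, add_mem_spectrum_add_smul_one_iff]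
  have := (Complex.re_le_norm _).trans_lt ((norm_le_specRad hmem).trans_lt h)
  simp only [add_re, ofReal_re] at this
  linarith

theorem IsMetzler.isHurwitz_iff_s1 {M : Matrix (Fin n) (Fin n) ℝ} (hM : IsMetzler M) :
    IsHurwitz M ↔ ∀ c : ℝ, 0 ≤ c → c ∉ spectrum ℝ M := by
  refine ⟨fun h c hc => h.notMem_spectrum hc, fun h => ?_⟩
  obtain ⟨s, hs, hA⟩ := hM.exists_nonneg_add_smul_one
  exact isHurwitz_of_specRad_add_smul_one_lt (specRad_add_smul_one_lt hs hA h)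

theorem IsMetzler.isHurwitz_of_le {M M' : Matrix (Fin n) (Fin n) ℝ} (hM : IsMetzler M)
    (hle : ∀ i j, M i j ≤ M' i j) (hM' : IsHurwitz M') : IsHurwitz M := by
  obtain ⟨s, hs, hA⟩ := hM.exists_nonneg_add_smul_one
  have hA' : ∀ i j, (M + s • 1) i j ≤ (M' + s • 1) i j := fun i j => by
    simpa using hle i j
  refine isHurwitz_of_specRad_add_smul_one_lt ((specRad_le_of_abs_le fun i j => ?_).trans_lt
    (specRad_add_smul_one_lt hs (fun i j => (hA i j).trans (hA' i j))
      fun c hc => hM'.notMem_spectrum hc))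
  rw [abs_of_nonneg (hA i j)]
  exact hA' i j

theorem IsMetzler.resolvent_apply_nonneg {M : Matrix (Fin n) (Fin n) ℝ} (hM : IsMetzler M)
    (hH : IsHurwitz M) {c : ℝ} (hc : 0 ≤ c) (i j : Fin n) : 0 ≤ resolvent M c i j := by
  obtain ⟨s, hs, hA⟩ := hM.exists_nonneg_add_smul_one
  have hρ := specRad_add_smul_one_lt hs hA fun c hc => hH.notMem_spectrum hc
  rw [← resolvent_add_smul_one M c s]
  exact _root_.resolvent_apply_nonneg hA (by linarith) i j

theorem IsMetzler.resolvent_apply_le {M : Matrix (Fin n) (Fin n) ℝ} (hM : IsMetzler M)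
    (hH : IsHurwitz M) {c d : ℝ} (hc : 0 ≤ c) (hcd : c ≤ d) (i j : Fin n) :
    resolvent M d i j ≤ resolvent M c i j := by
  obtain ⟨s, hs, hA⟩ := hM.exists_nonneg_add_smul_one
  have hρ := specRad_add_smul_one_lt hs hA fun c hc => hH.notMem_spectrum hc
  rw [← resolvent_add_smul_one M c s, ← resolvent_add_smul_one M d s]
  exact resolvent_apply_le_of_specRad_lt hA (by linarith) (by linarith) i j

section Perturbation

variable {H E : Matrix (Fin n) (Fin n) ℝ} (hM : IsMetzler H) (hH : IsHurwitz H)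
  (hE : ∀ i j, 0 ≤ E i j)
include hM hH hE

theorem isHurwitz_add_of_specRad_lt_one (hρ : specRad (E * resolvent H (0 : ℝ)) < 1) :
    IsHurwitz (H + E) := by
  refine (hM.add_of_nonneg hE).isHurwitz_iff_s1.mpr fun c hc =>
    (notMem_spectrum_add_iff (hH.notMem_spectrum hc)).mpr fun h1 => ?_
  have hle : specRad (E * resolvent H c) ≤ specRad (E * resolvent H (0 : ℝ)) :=
    specRad_le_of_abs_le fun i j => by
      rw [abs_of_nonneg (Matrix.mul_apply_nonneg hE (hM.resolvent_apply_nonneg hH hc) i j)]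
      exact Matrix.mul_apply_le_mul_apply hE (hM.resolvent_apply_le hH le_rfl hc) i j
  have := (abs_le_specRad h1).trans hle
  rw [abs_one] at this
  linarith

theorem specRad_lt_one_of_isHurwitz_add (hHE : IsHurwitz (H + E)) :
    specRad (E * resolvent H (0 : ℝ)) < 1 := by
  set ρ := specRad (E * resolvent H (0 : ℝ))
  by_contra! h1
  have hρ : 0 < ρ := one_pos.trans_le h1
  have hmem : ρ ∈ spectrum ℝ (E * resolvent H (0 : ℝ)) :=
    specRad_mem_spectrum (Matrix.mul_apply_nonneg hE (hM.resolvent_apply_nonneg hH le_rfl)) hρ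
  have h1mem : (1 : ℝ) ∈ spectrum ℝ ((ρ⁻¹ • E) * resolvent H (0 : ℝ)) := by
    have := (spectrum.smul_mem_smul_iff (r := Units.mk0 ρ⁻¹ (inv_ne_zero hρ.ne'))).mpr hmem
    simpa [Units.smul_def, inv_mul_cancel₀ hρ.ne', smul_mul_assoc] using this
  have hE' : ∀ i j, 0 ≤ (ρ⁻¹ • E) i j := fun i j => mul_nonneg (inv_nonneg.mpr hρ.le) (hE i j)
  have hHE' : IsHurwitz (H + ρ⁻¹ • E) := (hM.add_of_nonneg hE').isHurwitz_of_le (fun i j => by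
    simpa using mul_le_of_le_one_left (hE i j) (inv_le_one_of_one_le₀ h1)) hHE
  exact (notMem_spectrum_add_iff (hH.notMem_spectrum le_rfl)).mp
    (hHE'.notMem_spectrum le_rfl) h1mem

end Perturbation

/-- Lemma 3 (Stability of Perturbed Metzler Matrices): for `H` Metzler and Hurwitz and
`E ≥ 0`, `H + E` is Hurwitz iff `ρ(-E H⁻¹) < 1`. -/
theorem perturbed_metzler_hurwitz_iff_specRad_lt_one {n : ℕ} (H E : Matrix (Fin n) (Fin n) ℝ)
    (hHmetzler : IsMetzler H) (hHhurwitz : IsHurwitz H) (hE : ∀ i j, 0 ≤ E i j) :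
    IsHurwitz (H + E) ↔ specRad (-(E * H⁻¹)) < 1 := by
  have hP : -(E * H⁻¹) = E * resolvent H (0 : ℝ) := by
    rw [resolvent, map_zero, zero_sub, Ring.inverse_neg, ← Matrix.nonsing_inv_eq_ringInverse,
      mul_neg]
  rw [hP]
  exact ⟨specRad_lt_one_of_isHurwitz_add hHmetzler hHhurwitz hE,
    isHurwitz_add_of_specRad_lt_one hHmetzler hHhurwitz hE⟩
end

section
/- (Relaxing Lemma) Let V be an n×n real Metzler and Hurwitz matrix, and let F be an n×n real nonnegative matrix with F ≠ 0. Define R₀ = inf { r > 0 : there exists w ∈ ℝⁿ with w > 0 and Vw < 0 such that (F + rV) w < 0 } and R̂₀ = inf { r > 0 : there exists w ∈ ℝⁿ with w > 0 and Vw ≤ 0 such that (F + rV) w ≤ 0 }. Then R₀ = R̂₀. -/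
/-!
A Metzler, Hurwitz `V` admits `u > 0` with `V u < 0`: for small `c > 0` the matrix `1 + c V` is
entrywise nonnegative with spectrum inside the unit disc, so by Gelfand's formula its Neumann
series converges to a nonnegative inverse of `-c V`, and `u` is this inverse applied to the
all-ones vector.

If `w` witnesses the non-strict condition at `r`, then `w + t u` witnesses the strict one at every
`r' > r` once `t > 0` is small: rows with `(F w)_i > 0` are already strict at `r'`, and rows with
`(F w)_i = 0` are zero rows of `F`, where `u` contributes `r' (V u)_i < 0`. So the strict set
contains every positive shift of the non-strict one, and the infima agree.
-/

open Matrix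

open Filter Topology
open scoped Matrix.Norms.Frobenius

section GelfandFormula

variable {A : Type*} [NormedRing A] [NormedAlgebra ℂ A] [CompleteSpace A]

theorem summable_norm_pow_of_forall_norm_lt_one {a : A} (h : ∀ ν ∈ spectrum ℂ a, ‖ν‖ < 1) :
    Summable fun m : ℕ => ‖a ^ m‖ := by
  nontriviality A
  obtain ⟨c, hρc, hc1⟩ := ENNReal.lt_iff_exists_nnreal_btwn.1
    (spectrum.spectralRadius_lt_of_forall_lt a (r := 1) fun ν hν => by exact_mod_cast h ν hν)
  have hbound : ∀ᶠ m : ℕ in atTop, ‖a ^ m‖ ≤ (c : ℝ) ^ m := by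
    filter_upwards [eventually_gt_atTop 0,
      (spectrum.pow_norm_pow_one_div_tendsto_nhds_spectralRadius a).eventually_lt_const hρc]
      with m hm0 hm
    rw [← ENNReal.ofReal_coe_nnreal, ENNReal.ofReal_lt_ofReal_iff', one_div] at hm
    have := (Real.rpow_inv_lt_iff_of_pos (norm_nonneg (a ^ m)) c.2 (Nat.cast_pos.2 hm0)).1 hm.1
    exact_mod_cast this.le
  exact (summable_geometric_of_lt_one c.2 (by exact_mod_cast hc1)).of_norm_bounded_eventually_nat
    (by simpa using hbound)

end GelfandFormula

namespace Matrix

variable {ι : Type*} [Fintype ι]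

lemma mulVec_apply_nonneg {M : Matrix ι ι ℝ} (hM : ∀ i j, 0 ≤ M i j) {v : ι → ℝ}
    (hv : ∀ i, 0 ≤ v i) (i : ι) : 0 ≤ (M *ᵥ v) i :=
  Finset.sum_nonneg fun j _ => mul_nonneg (hM i j) (hv j)

variable [DecidableEq ι]

lemma summable_pow_of_forall_norm_lt_one {M : Matrix ι ι ℝ}
    (h : ∀ ν ∈ spectrum ℂ (M.map Complex.ofReal), ‖ν‖ < 1) : Summable (M ^ ·) := by
  refine Summable.of_norm ?_
  convert summable_norm_pow_of_forall_norm_lt_one h using 2 with m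
  rw [← frobenius_norm_map_eq (M ^ m) Complex.ofReal Complex.norm_real]
  exact congrArg norm (map_pow Complex.ofRealHom.mapMatrix M m)

lemma exists_pos_one_sub_mulVec_eq_one {M : Matrix ι ι ℝ} (hM : ∀ i j, 0 ≤ M i j)
    (hsum : Summable (M ^ ·)) : ∃ u : ι → ℝ, (∀ i, 0 < u i) ∧ (1 - M) *ᵥ u = 1 := by
  set N := ∑' m : ℕ, M ^ m
  have hN : ∀ i j, 0 ≤ N i j := fun i j =>
    (Pi.hasSum.1 (Pi.hasSum.1 hsum.hasSum i) j).nonneg fun m => pow_apply_nonneg hM m i j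
  have hu : ∀ i, 0 ≤ (N *ᵥ 1) i := mulVec_apply_nonneg hN fun _ => zero_le_one
  have hinv : (1 - M) *ᵥ (N *ᵥ 1) = 1 := by
    rw [mulVec_mulVec, hsum.one_sub_mul_tsum_pow, one_mulVec]
  refine ⟨N *ᵥ 1, fun i => ?_, hinv⟩
  have hfix : N *ᵥ 1 = 1 + M *ᵥ (N *ᵥ 1) := by
    rwa [sub_mulVec, one_mulVec, sub_eq_iff_eq_add] at hinv
  rw [hfix]
  simpa using add_pos_of_pos_of_nonneg one_pos (mulVec_apply_nonneg hM hu i)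

end Matrix

lemma Complex.eventually_norm_one_add_mul_lt_one {μ : ℂ} (hμ : μ.re < 0) :
    ∀ᶠ c : ℝ in 𝓝[>] 0, ‖1 + c * μ‖ < 1 := by
  have hsmall : ∀ᶠ c : ℝ in 𝓝 0, c * ‖μ‖ ^ 2 < -2 * μ.re :=
    ContinuousAt.eventually_lt (by fun_prop) continuousAt_const (by simp; linarith)
  filter_upwards [self_mem_nhdsWithin, nhdsWithin_le_nhds hsmall] with c (hc : 0 < c) hc'
  rw [← sq_lt_one_iff₀ (norm_nonneg _), Complex.sq_norm, Complex.normSq_apply]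
  rw [Complex.sq_norm, Complex.normSq_apply] at hc'
  simp only [Complex.add_re, Complex.one_re, Complex.mul_re, Complex.ofReal_re, Complex.ofReal_im,
    Complex.add_im, Complex.one_im, Complex.mul_im]
  nlinarith

section Metzler

variable {n : ℕ} {V : Matrix (Fin n) (Fin n) ℝ}

lemma IsMetzler.eventually_one_add_smul_nonneg (hV : IsMetzler V) :
    ∀ᶠ c : ℝ in 𝓝[>] 0, ∀ i j, 0 ≤ (1 + c • V) i j := by
  simp only [eventually_all]
  intro i j
  rcases eq_or_ne i j with rfl | hij
  · have hdiag : ∀ᶠ c : ℝ in 𝓝 0, 0 < 1 + c * V i i :=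
      ContinuousAt.eventually_lt continuousAt_const (by fun_prop) (by simp)
    filter_upwards [nhdsWithin_le_nhds hdiag] with c hc
    simpa using hc.le
  · filter_upwards [self_mem_nhdsWithin] with c (hc : 0 < c)
    simpa [hij] using mul_nonneg hc.le (hV i j hij)

lemma IsHurwitz.eventually_norm_lt_one (hV : IsHurwitz V) :
    ∀ᶠ c : ℝ in 𝓝[>] 0, ∀ ν ∈ spectrum ℂ ((1 + c • V).map Complex.ofReal), ‖ν‖ < 1 := by
  filter_upwards [(V.map Complex.ofReal).finite_spectrum.eventually_all.2
    fun μ hμ => Complex.eventually_norm_one_add_mul_lt_one (hV μ hμ), self_mem_nhdsWithin]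
    with c hc (hc0 : 0 < c) ν hν
  have hmap : (1 + c • V).map Complex.ofReal = algebraMap ℂ _ 1 +
      (Units.mk0 (c : ℂ) (by exact_mod_cast hc0.ne')) • V.map Complex.ofReal := by
    ext i j
    simp [Matrix.one_apply, apply_ite]
  rw [hmap, ← spectrum.singleton_add_eq, spectrum.unit_smul_eq_smul] at hν
  obtain ⟨_, rfl, _, ⟨μ, hμ, rfl⟩, rfl⟩ := hν
  simpa using hc μ hμ

lemma IsMetzler.exists_pos_mulVec_neg (hM : IsMetzler V) (hH : IsHurwitz V) :
    ∃ u : Fin n → ℝ, (∀ i, 0 < u i) ∧ ∀ i, (V *ᵥ u) i < 0 := by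
  obtain ⟨c, hc0 : 0 < c, hnonneg, hspec⟩ := (eventually_mem_nhdsWithin.and
    (hM.eventually_one_add_smul_nonneg.and hH.eventually_norm_lt_one)).exists
  obtain ⟨u, hu, hinv⟩ := Matrix.exists_pos_one_sub_mulVec_eq_one hnonneg
    (Matrix.summable_pow_of_forall_norm_lt_one hspec)
  refine ⟨u, hu, fun i => ?_⟩
  have hVu : V *ᵥ u = -c⁻¹ • 1 := by
    rw [sub_add_cancel_left, neg_mulVec, smul_mulVec, neg_eq_iff_eq_neg] at hinv
    rw [neg_smul, ← smul_neg, ← hinv, inv_smul_smul₀ hc0.ne']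
  simpa [hVu] using hc0

end Metzler

lemma exists_pos_add_mul_neg {ι : Type*} [Finite ι] {a b : ι → ℝ}
    (h : ∀ i, a i < 0 ∨ a i ≤ 0 ∧ b i < 0) : ∃ t > 0, ∀ i, a i + t * b i < 0 := by
  have hev : ∀ᶠ t : ℝ in 𝓝[>] 0, ∀ i, a i + t * b i < 0 := by
    refine eventually_all.2 fun i => ?_
    rcases h i with ha | ⟨ha, hb⟩
    · exact nhdsWithin_le_nhds
        (ContinuousAt.eventually_lt (by fun_prop) continuousAt_const (by simpa using ha))
    · filter_upwards [self_mem_nhdsWithin] with t (ht : 0 < t)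
      nlinarith
  obtain ⟨t, ht, hlt⟩ := (eventually_mem_nhdsWithin.and hev).exists
  exact ⟨t, ht, hlt⟩

namespace Matrix

variable {ι : Type*} [Fintype ι] {F V : Matrix ι ι ℝ}

lemma mulVec_apply_eq_zero_of_pos (hF : ∀ i j, 0 ≤ F i j) {w : ι → ℝ} (hw : ∀ i, 0 < w i)
    {i : ι} (hFw : (F *ᵥ w) i = 0) (v : ι → ℝ) : (F *ᵥ v) i = 0 := by
  have hrow : ∀ j, F i j = 0 := fun j => by
    have := (Finset.sum_eq_zero_iff_of_nonneg fun j _ => mul_nonneg (hF i j) (hw j).le).1 hFw j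
      (Finset.mem_univ j)
    exact (mul_eq_zero.1 this).resolve_right (hw j).ne'
  simp [mulVec, dotProduct, hrow]

lemma exists_pos_mulVec_neg_of_lt (hF : ∀ i j, 0 ≤ F i j) {u w : ι → ℝ}
    (hu : ∀ i, 0 < u i) (hVu : ∀ i, (V *ᵥ u) i < 0) (hw : ∀ i, 0 < w i)
    (hVw : ∀ i, (V *ᵥ w) i ≤ 0) {r r' : ℝ} (hr : 0 ≤ r) (hrr' : r < r')
    (hFVw : ∀ i, ((F + r • V) *ᵥ w) i ≤ 0) :
    ∃ w' : ι → ℝ, (∀ i, 0 < w' i) ∧ (∀ i, (V *ᵥ w') i < 0) ∧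
      ∀ i, ((F + r' • V) *ᵥ w') i < 0 := by
  have hexpand : ∀ (ρ : ℝ) (v : ι → ℝ) i, ((F + ρ • V) *ᵥ v) i = (F *ᵥ v) i + ρ * (V *ᵥ v) i :=
    fun ρ v i => by simp [add_mulVec, smul_mulVec]
  obtain ⟨t, ht, hlt⟩ := exists_pos_add_mul_neg
    (a := (F + r' • V) *ᵥ w) (b := (F + r' • V) *ᵥ u) fun i => by
    have hrw := hFVw i
    simp only [hexpand] at hrw ⊢
    have hVwi := hVw i
    rcases (mulVec_apply_nonneg hF (fun j => (hw j).le) i).lt_or_eq with hpos | hzero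
    · left
      nlinarith
    · right
      rw [← hzero, mulVec_apply_eq_zero_of_pos hF hw hzero.symm u]
      constructor <;> nlinarith [hVu i]
  refine ⟨w + t • u, fun i => ?_, fun i => ?_, fun i => ?_⟩
  · simpa using add_pos (hw i) (mul_pos ht (hu i))
  · simpa [mulVec_add, mulVec_smul] using
      add_neg_of_nonpos_of_neg (hVw i) (mul_neg_of_pos_of_neg ht (hVu i))
  · simpa [mulVec_add, mulVec_smul] using hlt i

end Matrix

lemma csInf_eq_of_subset_of_forall_add_mem {S T : Set ℝ} (hT : BddBelow T) (hST : S ⊆ T)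
    (hTS : ∀ r ∈ T, ∀ ε > 0, r + ε ∈ S) : sInf S = sInf T := by
  rcases T.eq_empty_or_nonempty with rfl | ⟨r, hr⟩
  · rw [Set.subset_empty_iff.1 hST]
  refine le_antisymm (le_csInf ⟨r, hr⟩ fun r' hr' => ?_)
    (csInf_le_csInf hT ⟨r + 1, hTS r hr 1 one_pos⟩ hST)
  exact le_of_forall_pos_le_add fun ε hε => csInf_le (hT.mono hST) (hTS r' hr' ε hε)

theorem relaxing_lemma_general {n : ℕ} (V F : Matrix (Fin n) (Fin n) ℝ)
    (hVmetzler : IsMetzler V) (hVhurwitz : IsHurwitz V)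
    (hF : ∀ i j, 0 ≤ F i j) :
    sInf {r : ℝ | 0 < r ∧ ∃ w : Fin n → ℝ, (∀ i, 0 < w i) ∧ (∀ i, (V *ᵥ w) i < 0) ∧
        ∀ i, ((F + r • V) *ᵥ w) i < 0}
      = sInf {r : ℝ | 0 < r ∧ ∃ w : Fin n → ℝ, (∀ i, 0 < w i) ∧ (∀ i, (V *ᵥ w) i ≤ 0) ∧
        ∀ i, ((F + r • V) *ᵥ w) i ≤ 0} := by
  obtain ⟨u, hu, hVu⟩ := hVmetzler.exists_pos_mulVec_neg hVhurwitz
  refine csInf_eq_of_subset_of_forall_add_mem ⟨0, fun r hr => hr.1.le⟩ ?_ ?_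
  · rintro r ⟨hr, w, hw, hVw, hFVw⟩
    exact ⟨hr, w, hw, fun i => (hVw i).le, fun i => (hFVw i).le⟩
  · rintro r ⟨hr, w, hw, hVw, hFVw⟩ ε hε
    exact ⟨by positivity, Matrix.exists_pos_mulVec_neg_of_lt hF hu hVu hw hVw hr.le
      (lt_add_of_pos_right r hε) hFVw⟩

/-- The Relaxing Lemma: for `V` Metzler and Hurwitz and `F ≥ 0` with `F ≠ 0`,
`inf { r > 0 : ∃ w > 0, Vw < 0, (F + rV) w < 0 } = inf { r > 0 : ∃ w > 0, Vw ≤ 0, (F + rV) w ≤ 0 }`. -/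
theorem relaxing_lemma {n : ℕ} (V F : Matrix (Fin n) (Fin n) ℝ)
    (hVmetzler : IsMetzler V) (hVhurwitz : IsHurwitz V)
    (hF : ∀ i j, 0 ≤ F i j) (hFne : F ≠ 0) :
    sInf {r : ℝ | 0 < r ∧ ∃ w : Fin n → ℝ, (∀ i, 0 < w i) ∧ (∀ i, (V *ᵥ w) i < 0) ∧
        ∀ i, ((F + r • V) *ᵥ w) i < 0}
      = sInf {r : ℝ | 0 < r ∧ ∃ w : Fin n → ℝ, (∀ i, 0 < w i) ∧ (∀ i, (V *ᵥ w) i ≤ 0) ∧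
        ∀ i, ((F + r • V) *ᵥ w) i ≤ 0} :=
  relaxing_lemma_general V F hVmetzler hVhurwitz hF
end

section
/- Let V and V' be n×n real Metzler and Hurwitz matrices with V' ≤ V entrywise. Then V⁻¹ ≤ V'⁻¹ ≤ 0 entrywise. -/
/-!
For a Metzler matrix `V` and large `s > 0`, the matrix `C = 1 + s⁻¹ • V` is entrywise
nonnegative. If `V` is also Hurwitz, the spectrum `1 + s⁻¹ • σ(V)` of `C` lies in the open unit
disc once `s` is large, because a compact subset of the open left half-plane lies in the disc
`‖μ + s‖ < s`. Gelfand's formula then gives `C ^ m → 0`, so that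
`-s • V⁻¹ = (1 - C)⁻¹ = ∑ C ^ k ≥ 0`. For two such matrices with `V' ≤ V`, the resolvent identity
`V'⁻¹ - V⁻¹ = (-V'⁻¹) * (V - V') * (-V⁻¹)` exhibits the difference as a product of nonnegative
matrices.
-/

open Matrix

open Filter Topology

theorem tendsto_pow_nhds_zero_of_forall_spectrum_norm_lt_one {A : Type*} [NormedRing A]
    [NormedAlgebra ℂ A] [CompleteSpace A] {a : A} (h : ∀ z ∈ spectrum ℂ a, ‖z‖ < 1) :
    Tendsto (fun n : ℕ => a ^ n) atTop (𝓝 0) := by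
  cases subsingleton_or_nontrivial A
  · simpa only [Subsingleton.elim _ (0 : A)] using tendsto_const_nhds
  obtain ⟨t, hρt, ht1⟩ := ENNReal.lt_iff_exists_nnreal_btwn.mp <|
    spectrum.spectralRadius_lt_of_forall_lt a (r := 1) fun z hz => by exact_mod_cast h z hz
  have hgelfand := spectrum.pow_norm_pow_one_div_tendsto_nhds_spectralRadius a
  have hbound : ∀ᶠ n : ℕ in atTop, ‖a ^ n‖ ≤ (t : ℝ) ^ n := by
    filter_upwards [hgelfand.eventually_lt_const hρt, eventually_gt_atTop 0] with n hn hn0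
    rw [ENNReal.ofReal_lt_iff_lt_toReal (by positivity) ENNReal.coe_ne_top, ENNReal.coe_toReal,
      one_div] at hn
    have := (Real.rpow_inv_lt_iff_of_pos (norm_nonneg (a ^ n)) t.2 (Nat.cast_pos.mpr hn0)).mp hn
    simpa using this.le
  refine tendsto_zero_iff_norm_tendsto_zero.mpr <|
    squeeze_zero' (.of_forall fun _ => norm_nonneg _) hbound ?_
  exact tendsto_pow_atTop_nhds_zero_of_lt_one t.2 (by exact_mod_cast ht1)

theorem spectrum.one_add_smul_eq {𝕜 A : Type*} [Field 𝕜] [Ring A] [Algebra 𝕜 A] (a : A) {c : 𝕜}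
    (hc : c ≠ 0) : spectrum 𝕜 (1 + c • a) = (fun μ => 1 + c * μ) '' spectrum 𝕜 a := by
  have := spectrum.unit_smul_eq_smul a (Units.mk0 c hc)
  rw [← map_one (algebraMap 𝕜 A), ← spectrum.singleton_add_eq, ← Units.val_mk0 hc,
    ← Units.smul_def, this]
  ext; simp [Set.mem_smul_set, eq_neg_add_iff_add_eq]

theorem spectrum.norm_lt_one_of_forall_norm_add_lt {A : Type*} [Ring A] [Algebra ℂ A] {a : A}
    {s : ℝ} (hs : 0 < s) (h : ∀ μ ∈ spectrum ℂ a, ‖μ + s‖ < s) :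
    ∀ z ∈ spectrum ℂ (1 + (s : ℂ)⁻¹ • a), ‖z‖ < 1 := by
  have hs' : (s : ℂ) ≠ 0 := Complex.ofReal_ne_zero.mpr hs.ne'
  simp only [spectrum.one_add_smul_eq a (inv_ne_zero hs'), Set.forall_mem_image]
  intro μ hμ
  rw [show 1 + (s : ℂ)⁻¹ * μ = (μ + s) / s by field_simp; ring, norm_div,
    Complex.norm_of_nonneg hs.le]
  exact (div_lt_one hs).mpr (h μ hμ)

theorem Complex.eventually_forall_norm_add_lt {K : Set ℂ} (hK : IsCompact K)
    (hre : ∀ μ ∈ K, μ.re < 0) : ∀ᶠ s : ℝ in atTop, ∀ μ ∈ K, ‖μ + s‖ < s := by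
  obtain ⟨R, hR⟩ := hK.bddAbove_image (f := fun μ : ℂ => ‖μ‖ ^ 2 / (-2 * μ.re)) <|
    ContinuousOn.div (by fun_prop) (by fun_prop) fun μ hμ => by linarith [hre μ hμ]
  filter_upwards [eventually_gt_atTop (max R 0)] with s hs μ hμ
  have hs0 : 0 < s := (le_max_right _ _).trans_lt hs
  have hμR : ‖μ‖ ^ 2 / (-2 * μ.re) < s :=
    (hR ⟨μ, hμ, rfl⟩).trans_lt ((le_max_left _ _).trans_lt hs)
  rw [div_lt_iff₀ (by linarith [hre μ hμ])] at hμR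
  refine lt_of_pow_lt_pow_left₀ 2 hs0.le ?_
  rw [Complex.sq_norm, Complex.normSq_apply] at hμR ⊢
  simp only [add_re, ofReal_re, add_im, ofReal_im, add_zero]
  nlinarith

namespace Matrix

theorem mul_apply_nonneg_s9 {l m n R : Type*} [Fintype m] [Semiring R] [PartialOrder R]
    [IsOrderedRing R] {A : Matrix l m R} {B : Matrix m n R} (hA : ∀ i j, 0 ≤ A i j)
    (hB : ∀ i j, 0 ≤ B i j) (i : l) (j : n) : 0 ≤ (A * B) i j :=
  Finset.sum_nonneg fun k _ => mul_nonneg (hA i k) (hB k j)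

variable {ι : Type*} [Fintype ι] [DecidableEq ι]

theorem isUnit_det_one_sub_of_tendsto_pow {K : Type*} [Field K] [TopologicalSpace K]
    [IsTopologicalRing K] [T1Space K] {C : Matrix ι ι K}
    (hC : Tendsto (fun m : ℕ => C ^ m) atTop (𝓝 0)) : IsUnit (1 - C).det := by
  have hlim : Tendsto (fun m : ℕ => (1 - C ^ m).det) atTop (𝓝 1) := by
    have hdet : Continuous fun M : Matrix ι ι K => (1 - M).det :=
      (continuous_const.sub continuous_id).matrix_det
    simpa [Function.comp_def] using (hdet.tendsto 0).comp hC
  obtain ⟨m, hm⟩ := (hlim.eventually_ne one_ne_zero).exists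
  rw [← mul_neg_geom_sum, det_mul] at hm
  exact isUnit_iff_ne_zero.mpr (left_ne_zero_of_mul hm)

theorem inv_one_sub_apply_nonneg {C : Matrix ι ι ℝ} (hC0 : ∀ i j, 0 ≤ C i j)
    (hC : Tendsto (fun m : ℕ => C ^ m) atTop (𝓝 0)) (i j : ι) : 0 ≤ (1 - C)⁻¹ i j := by
  have hneumann : Tendsto (fun m => ∑ k ∈ Finset.range m, C ^ k) atTop (𝓝 (1 - C)⁻¹) := by
    have hsum (m : ℕ) : ∑ k ∈ Finset.range m, C ^ k = (1 - C)⁻¹ * (1 - C ^ m) := by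
      rw [← mul_neg_geom_sum, ← mul_assoc,
        nonsing_inv_mul _ (isUnit_det_one_sub_of_tendsto_pow hC), one_mul]
    simp_rw [hsum]
    simpa using ((tendsto_const_nhds (x := (1 : Matrix ι ι ℝ))).sub hC).const_mul (1 - C)⁻¹
  refine ge_of_tendsto' (((continuous_apply_apply i j).tendsto _).comp hneumann) fun m => ?_
  show 0 ≤ (∑ k ∈ Finset.range m, C ^ k) i j
  rw [sum_apply]
  exact Finset.sum_nonneg fun k _ => pow_apply_nonneg hC0 k i j

section LinftyOpNorm

attribute [local instance] Matrix.linftyOpNormedRing Matrix.linftyOpNormedAlgebra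

theorem tendsto_pow_nhds_zero_of_forall_spectrum_map_ofReal {C : Matrix ι ι ℝ}
    (h : ∀ z ∈ spectrum ℂ (C.map Complex.ofReal), ‖z‖ < 1) :
    Tendsto (fun m : ℕ => C ^ m) atTop (𝓝 0) := by
  have hc := tendsto_pow_nhds_zero_of_forall_spectrum_norm_lt_one h
  have hpow (m : ℕ) : (C.map Complex.ofReal ^ m).map Complex.re = C ^ m := by
    have : C.map Complex.ofReal ^ m = (C ^ m).map Complex.ofReal :=
      (map_pow Complex.ofRealHom.mapMatrix C m).symm
    ext; simp [this]
  simpa [Function.comp_def, hpow] using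
    ((continuous_id.matrix_map Complex.continuous_re).tendsto 0).comp hc

end LinftyOpNorm

end Matrix

theorem IsHurwitz.isUnit_det {n : ℕ} {V : Matrix (Fin n) (Fin n) ℝ} (hV : IsHurwitz V) :
    IsUnit V.det := by
  have hunit : IsUnit (V.map Complex.ofReal) :=
    (spectrum.zero_notMem_iff ℂ).mp fun h0 => (hV 0 h0).false
  rw [isUnit_iff_isUnit_det,
    show (V.map Complex.ofReal).det = V.det from (Complex.ofRealHom.map_det V).symm] at hunit
  exact isUnit_iff_ne_zero.mpr (Complex.ofReal_ne_zero.mp hunit.ne_zero)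

theorem IsMetzler.one_add_inv_smul_apply_nonneg {n : ℕ} {V : Matrix (Fin n) (Fin n) ℝ}
    (hM : IsMetzler V) {s : ℝ} (hs : 0 < s) (hdiag : ∀ i, -V i i ≤ s) (i j : Fin n) :
    0 ≤ (1 + s⁻¹ • V) i j := by
  rcases eq_or_ne i j with rfl | hij
  · have : -1 ≤ s⁻¹ * V i i := by rw [le_inv_mul_iff₀ hs]; linarith [hdiag i]
    simp only [Matrix.add_apply, one_apply_eq, Matrix.smul_apply, smul_eq_mul]
    linarith
  · simpa [one_apply_ne hij] using mul_nonneg (inv_nonneg.mpr hs.le) (hM i j hij)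

theorem IsMetzler.inv_apply_nonpos {n : ℕ} {V : Matrix (Fin n) (Fin n) ℝ} (hM : IsMetzler V)
    (hH : IsHurwitz V) (i j : Fin n) : V⁻¹ i j ≤ 0 := by
  obtain ⟨s, hs, hdiag, hspec⟩ : ∃ s : ℝ, 0 < s ∧ (∀ i, -V i i ≤ s) ∧
      ∀ μ ∈ spectrum ℂ (V.map Complex.ofReal), ‖μ + s‖ < s :=
    ((eventually_gt_atTop 0).and ((eventually_all.mpr fun i => eventually_ge_atTop (-V i i)).and
      (Complex.eventually_forall_norm_add_lt (finite_spectrum _).isCompact hH))).exists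
  set C := 1 + s⁻¹ • V with hC
  have hCc : C.map Complex.ofReal = 1 + (s : ℂ)⁻¹ • V.map Complex.ofReal := by
    ext i j; by_cases h : i = j <;> simp [hC, one_apply, h]
  have hCpow : Tendsto (fun m : ℕ => C ^ m) atTop (𝓝 0) :=
    tendsto_pow_nhds_zero_of_forall_spectrum_map_ofReal <|
      hCc ▸ spectrum.norm_lt_one_of_forall_norm_add_lt hs hspec
  have hinv : V⁻¹ = -s⁻¹ • (1 - C)⁻¹ := by
    have hVC : V = -s • (1 - C) := by
      rw [hC, sub_add_cancel_left, smul_neg, neg_smul, neg_neg, smul_smul,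
        mul_inv_cancel₀ hs.ne', one_smul]
    refine inv_eq_left_inv ?_
    rw [hVC, smul_mul_smul, nonsing_inv_mul _ (isUnit_det_one_sub_of_tendsto_pow hCpow)]
    simp [hs.ne']
  rw [hinv, Matrix.smul_apply, smul_eq_mul, neg_mul, neg_nonpos]
  exact mul_nonneg (inv_nonneg.mpr hs.le)
    (inv_one_sub_apply_nonneg (hM.one_add_inv_smul_apply_nonneg hs hdiag) hCpow i j)

/-- If `V` and `V'` are Metzler and Hurwitz with `V' ≤ V` entrywise, then
`V⁻¹ ≤ V'⁻¹ ≤ 0` entrywise. -/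
theorem inv_le_inv_le_zero_of_metzler_hurwitz {n : ℕ} (V V' : Matrix (Fin n) (Fin n) ℝ)
    (hVmetzler : IsMetzler V) (hVhurwitz : IsHurwitz V)
    (hV'metzler : IsMetzler V') (hV'hurwitz : IsHurwitz V')
    (hle : ∀ i j, V' i j ≤ V i j) :
    ∀ i j, V⁻¹ i j ≤ V'⁻¹ i j ∧ V'⁻¹ i j ≤ 0 := by
  have hV := hVmetzler.inv_apply_nonpos hVhurwitz
  have hV' := hV'metzler.inv_apply_nonpos hV'hurwitz
  have hdiff : V'⁻¹ - V⁻¹ = -V'⁻¹ * (V - V') * -V⁻¹ := by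
    rw [inv_sub_inv (iff_of_true ((isUnit_iff_isUnit_det _).mpr hV'hurwitz.isUnit_det)
      ((isUnit_iff_isUnit_det _).mpr hVhurwitz.isUnit_det))]
    simp only [neg_mul, mul_neg, neg_neg]
  intro i j
  refine ⟨?_, hV' i j⟩
  have hnonneg : 0 ≤ (-V'⁻¹ * (V - V') * -V⁻¹) i j :=
    mul_apply_nonneg_s9 (mul_apply_nonneg_s9 (fun i j => neg_nonneg.mpr (hV' i j))
      (fun i j => sub_nonneg.mpr (hle i j))) (fun i j => neg_nonneg.mpr (hV i j)) i j
  rwa [← hdiff, Matrix.sub_apply, sub_nonneg] at hnonneg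
end
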